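/- arXiv:1911.12776 — 6 statements merged into one kernel-verified Lean document; each statement's English description precedes it below -/
import Mathlib

section
/- Let M₁, M₂ : ℝⁿ → ℝⁿ be paracontractions with respect to the same norm, with fix(M₁) ∩ fix(M₂) ≠ ∅. Then the composition M₁ ∘ M₂ is a paracontraction with respect to that norm, and fix(M₁ ∘ M₂) = fix(M₁) ∩ fix(M₂). -/
/-- the composition of two paracontractions (w.r.t. the same norm)
with a common fixed point is a paracontraction, and
fix(M₁ ∘ M₂) = fix(M₁) ∩ fix(M₂). -/
theorem composition_paracontraction {n : ℕ}
    (M₁ M₂ : EuclideanSpace ℝ (Fin n) → EuclideanSpace ℝ (Fin n))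
    (hM₁c : Continuous M₁) (hM₂c : Continuous M₂)
    (hM₁ : ∀ x y, M₁ y = y → M₁ x ≠ x → ‖M₁ x - y‖ < ‖x - y‖)
    (hM₂ : ∀ x y, M₂ y = y → M₂ x ≠ x → ‖M₂ x - y‖ < ‖x - y‖)
    (hfix : ∃ z, M₁ z = z ∧ M₂ z = z) :
    (∀ x y, M₁ (M₂ y) = y → M₁ (M₂ x) ≠ x → ‖M₁ (M₂ x) - y‖ < ‖x - y‖) ∧
    {x | M₁ (M₂ x) = x} = {x | M₁ x = x} ∩ {x | M₂ x = x} := by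
  obtain ⟨z, hz₁, hz₂⟩ := hfix
  -- nonexpansiveness toward fixed points
  have ne₁ : ∀ x y, M₁ y = y → ‖M₁ x - y‖ ≤ ‖x - y‖ := by
    intro x y hy
    by_cases hx : M₁ x = x
    · rw [hx]
    · exact (hM₁ x y hy hx).le
  have ne₂ : ∀ x y, M₂ y = y → ‖M₂ x - y‖ ≤ ‖x - y‖ := by
    intro x y hy
    by_cases hx : M₂ x = x
    · rw [hx]
    · exact (hM₂ x y hy hx).le
  -- fixed points of composition are common fixed points
  have key : ∀ y, M₁ (M₂ y) = y → M₁ y = y ∧ M₂ y = y := by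
    intro y hy
    have h2 : M₂ y = y := by
      by_contra h
      have h1 : ‖M₂ y - z‖ < ‖y - z‖ := hM₂ y z hz₂ h
      have h3 : ‖M₁ (M₂ y) - z‖ ≤ ‖M₂ y - z‖ := ne₁ _ z hz₁
      rw [hy] at h3
      exact absurd (lt_of_le_of_lt h3 h1) (lt_irrefl _)
    refine ⟨?_, h2⟩
    rw [h2] at hy
    exact hy
  constructor
  · intro x y hy hx
    obtain ⟨hy1, hy2⟩ := key y hy
    by_cases h2 : M₂ x = x
    · rw [h2]
      rw [h2] at hx
      exact hM₁ x y hy1 hx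
    · exact lt_of_le_of_lt (ne₁ (M₂ x) y hy1) (hM₂ x y hy2 h2)
  · ext x
    simp only [Set.mem_setOf_eq, Set.mem_inter_iff]
    constructor
    · exact key x
    · rintro ⟨h1, h2⟩
      rw [h2, h1]
end

section
/- Let M₁, M₂ : ℝⁿ → ℝⁿ both be paracontractions with respect to the same norm, with fix(M₁) ∩ fix(M₂) ≠ ∅, and let α ∈ (0,1). Then (1−α)M₁ + αM₂ is a paracontraction (for points outside fix(M₁) ∪ fix(M₂), strict contraction toward common fixed points holds). -/
/-- a convex combination of two paracontractions with a common fixed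
point is a paracontraction: for every common fixed point y and every x outside
fix(M₁) or outside fix(M₂), the strict contraction toward y holds. -/
theorem convex_comb_two_paracontractions {n : ℕ}
    (M₁ M₂ : EuclideanSpace ℝ (Fin n) → EuclideanSpace ℝ (Fin n))
    (hM₁c : Continuous M₁) (hM₂c : Continuous M₂)
    (hM₁ : ∀ x y, M₁ y = y → M₁ x ≠ x → ‖M₁ x - y‖ < ‖x - y‖)
    (hM₂ : ∀ x y, M₂ y = y → M₂ x ≠ x → ‖M₂ x - y‖ < ‖x - y‖)
    (hfix : ∃ z, M₁ z = z ∧ M₂ z = z)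
    (α : ℝ) (hα : α ∈ Set.Ioo (0:ℝ) 1) :
    ∀ y, M₁ y = y → M₂ y = y → ∀ x, (M₁ x ≠ x ∨ M₂ x ≠ x) →
      ‖((1 - α) • M₁ x + α • M₂ x) - y‖ < ‖x - y‖ := by
  obtain ⟨hα0, hα1⟩ := hα
  intro y hy1 hy2 x hx
  have key : (1 - α) * ‖M₁ x - y‖ + α * ‖M₂ x - y‖ < ‖x - y‖ := by
    have h1 : ‖M₁ x - y‖ ≤ ‖x - y‖ := by
      by_cases h : M₁ x = x
      · rw [h]
      · exact (hM₁ x y hy1 h).le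
    have h2 : ‖M₂ x - y‖ ≤ ‖x - y‖ := by
      by_cases h : M₂ x = x
      · rw [h]
      · exact (hM₂ x y hy2 h).le
    rcases hx with h | h
    · have := hM₁ x y hy1 h
      nlinarith
    · have := hM₂ x y hy2 h
      nlinarith
  calc ‖((1 - α) • M₁ x + α • M₂ x) - y‖
      = ‖(1 - α) • (M₁ x - y) + α • (M₂ x - y)‖ := by
        congr 1
        module
    _ ≤ ‖(1 - α) • (M₁ x - y)‖ + ‖α • (M₂ x - y)‖ := norm_add_le _ _
    _ = (1 - α) * ‖M₁ x - y‖ + α * ‖M₂ x - y‖ := by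
        rw [norm_smul, norm_smul, Real.norm_eq_abs, Real.norm_eq_abs,
          abs_of_pos (by linarith), abs_of_pos hα0]
    _ < ‖x - y‖ := key
end

section
/- Let A be an N×N doubly stochastic matrix with strictly positive diagonal entries. Then the linear operator x ↦ (A ⊗ I_n)x on ℝ^{Nn} is a paracontraction with respect to the mixed norm ‖x‖_{2,2} (i.e., the Euclidean norm on the stacked vector): for every fixed point y of A ⊗ I_n and every x with (A⊗I_n)x ≠ x, ‖(A⊗I_n)x − y‖ < ‖x − y‖. -/
/-!
Put `z = x - y`. Since `y` is fixed, the `i`-th block of `(A ⊗ Iₙ)x - y` is the convex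
combination `∑ⱼ aᵢⱼ zⱼ`, so by Jensen for the strictly convex `‖·‖²` its squared norm is at most
`∑ⱼ aᵢⱼ ‖zⱼ‖²`; summing over `i` and using the column sums gives `‖(A ⊗ Iₙ)x - y‖ ≤ ‖x - y‖`.
Equality forces equality in every row, where all `zⱼ` of positive weight coincide with their
mean; as `aᵢᵢ > 0` this mean is `zᵢ`, i.e. `x` is fixed.
-/

open Finset Matrix

section Jensen

variable {ι E : Type*} [NormedAddCommGroup E] [InnerProductSpace ℝ E]

theorem strictConvexOn_univ_norm_sq : StrictConvexOn ℝ Set.univ (fun x : E ↦ ‖x‖ ^ 2) :=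
  StrongConvexOn.strictConvexOn (m := 2)
    (strongConvexOn_iff_convex.2 (by simpa using convexOn_const 0 convex_univ)) two_pos

variable {t : Finset ι} {w : ι → ℝ} {z : ι → E}

theorem norm_sq_sum_smul_le (h₀ : ∀ i ∈ t, 0 ≤ w i) (h₁ : ∑ i ∈ t, w i = 1) :
    ‖∑ i ∈ t, w i • z i‖ ^ 2 ≤ ∑ i ∈ t, w i * ‖z i‖ ^ 2 :=
  strictConvexOn_univ_norm_sq.convexOn.map_sum_le h₀ h₁ (fun _ _ ↦ Set.mem_univ _)

theorem norm_sq_sum_smul_lt {j : ι} (h₀ : ∀ i ∈ t, 0 ≤ w i) (h₁ : ∑ i ∈ t, w i = 1)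
    (hj : j ∈ t) (hwj : 0 < w j) (hne : ∑ i ∈ t, w i • z i ≠ z j) :
    ‖∑ i ∈ t, w i • z i‖ ^ 2 < ∑ i ∈ t, w i * ‖z i‖ ^ 2 := by
  refine (norm_sq_sum_smul_le h₀ h₁).lt_of_ne fun heq ↦ hne ?_
  exact ((strictConvexOn_univ_norm_sq.map_sum_eq_iff' h₀ h₁ fun _ _ ↦ Set.mem_univ _).1 heq
    j hj hwj.ne').symm

end Jensen

variable {ι E : Type*} [Fintype ι] [DecidableEq ι] [NormedAddCommGroup E] [InnerProductSpace ℝ E]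

theorem norm_lt_of_mem_doublyStochastic {A : Matrix ι ι ℝ} (hA : A ∈ doublyStochastic ℝ ι)
    (hdiag : ∀ i, 0 < A i i) {u z : PiLp 2 (fun _ : ι ↦ E)}
    (hu : ∀ i, u i = ∑ j, A i j • z j) (hne : u ≠ z) : ‖u‖ < ‖z‖ := by
  obtain ⟨hnonneg, hrow, hcol⟩ := mem_doublyStochastic_iff_sum.1 hA
  obtain ⟨i₀, hi₀⟩ : ∃ i, u i ≠ z i := by
    by_contra! h
    exact hne (PiLp.ext h)
  have hrow_le (i : ι) : ‖u i‖ ^ 2 ≤ ∑ j, A i j * ‖z j‖ ^ 2 :=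
    hu i ▸ norm_sq_sum_smul_le (fun j _ ↦ hnonneg i j) (hrow i)
  have hrow_lt : ‖u i₀‖ ^ 2 < ∑ j, A i₀ j * ‖z j‖ ^ 2 :=
    hu i₀ ▸ norm_sq_sum_smul_lt (fun j _ ↦ hnonneg i₀ j) (hrow i₀) (mem_univ i₀) (hdiag i₀)
      (hu i₀ ▸ hi₀)
  refine lt_of_pow_lt_pow_left₀ 2 (norm_nonneg z) ?_
  calc ‖u‖ ^ 2 = ∑ i, ‖u i‖ ^ 2 := PiLp.norm_sq_eq_of_L2 _ u
    _ < ∑ i, ∑ j, A i j * ‖z j‖ ^ 2 :=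
      sum_lt_sum (fun i _ ↦ hrow_le i) ⟨i₀, mem_univ i₀, hrow_lt⟩
    _ = ∑ j, ‖z j‖ ^ 2 := by
      rw [sum_comm]
      simp only [← sum_mul, hcol, one_mul]
    _ = ‖z‖ ^ 2 := (PiLp.norm_sq_eq_of_L2 _ z).symm

/-- for a doubly stochastic N×N matrix A with strictly positive
diagonal, the operator x ↦ (A ⊗ I_n)x on ℝ^{Nn}, acting blockwise by
(Lx)_i = Σ_j a_{ij} x_j, is a paracontraction w.r.t. the mixed ‖·‖_{2,2} norm. -/
theorem kronecker_doubly_stochastic_paracontraction {N n : ℕ}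
    (A : Matrix (Fin N) (Fin N) ℝ)
    (hnonneg : ∀ i j, 0 ≤ A i j)
    (hrow : ∀ i, ∑ j, A i j = 1)
    (hcol : ∀ j, ∑ i, A i j = 1)
    (hdiag : ∀ i, 0 < A i i)
    (L : PiLp 2 (fun _ : Fin N => EuclideanSpace ℝ (Fin n)) →
         PiLp 2 (fun _ : Fin N => EuclideanSpace ℝ (Fin n)))
    (hL : ∀ x i, L x i = ∑ j, A i j • x j) :
    ∀ y, L y = y → ∀ x, L x ≠ x → ‖L x - y‖ < ‖x - y‖ := by
  intro y hy x hx
  refine norm_lt_of_mem_doublyStochastic (mem_doublyStochastic_iff_sum.2 ⟨hnonneg, hrow, hcol⟩)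
    hdiag (fun i ↦ ?_) (fun h ↦ hx (sub_left_injective h))
  conv_lhs => rw [PiLp.sub_apply, ← hy, hL, hL, ← sum_sub_distrib]
  simp only [PiLp.sub_apply, smul_sub]
end

section
/- Let A be an N×N doubly stochastic matrix with positive diagonal whose associated graph is strongly connected, let C ⊆ ℝⁿ be nonempty closed convex, α ∈ (0,1], and let T : ℝ^{Nn} → ℝ^{Nn} act blockwise by T_i = (1−β) proj_C + β Q_C for β ∈ [0,1). Define S(w) := (1−α)(A⊗I_n)w + α(A⊗I_n)T(w). Then fix(S) = 𝒜 ∩ C^N, where 𝒜 is the consensus set and C^N = {col(x₁,…,x_N) : x_i ∈ C ∀i}. In particular every consensus vector col(c,…,c) with c ∈ C is a fixed point of S. -/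
/-!
The relaxed projection `x ↦ x + t (P x - x)`, `0 ≤ t ≤ 2`, moves no point farther from any
point of `C`, and for `t ≠ 0` its fixed points are exactly `C`; `S` applies `A` blockwise to
such a map with `t = α (1 + β)`. Fix `c ∈ C`. Averaging with a doubly stochastic matrix does not
increase `∑ ‖·‖²` (Jensen for the strictly convex `‖·‖²`, summed using the column sums), so at a
fixed point of `S` every Jensen inequality is an equality: on the support of each row the blocks
agree. The positive diagonal and strong connectivity spread this to consensus, after which the
fixed point equation says each block is fixed by the relaxed projection, i.e. lies in `C`.
-/

open Finset
open scoped RealInnerProductSpace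

section MetricProjection

variable {E : Type*} [NormedAddCommGroup E]

def IsMetricProjection (C : Set E) (P : E → E) : Prop :=
  ∀ x, P x ∈ C ∧ ∀ z ∈ C, ‖x - P x‖ ≤ ‖x - z‖

variable {C : Set E} {P : E → E}

theorem IsMetricProjection.apply_eq_self (hP : IsMetricProjection C P) {x : E} (hx : x ∈ C) :
    P x = x := by
  have h := (hP x).2 x hx
  rw [sub_self, norm_zero, norm_le_zero_iff, sub_eq_zero] at h
  exact h.symm

variable [InnerProductSpace ℝ E]

def relaxedProj (P : E → E) (t : ℝ) (x : E) : E :=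
  x + t • (P x - x)

theorem IsMetricProjection.inner_sub_apply_le_zero (hP : IsMetricProjection C P)
    (hC : Convex ℝ C) (x : E) {z : E} (hz : z ∈ C) : ⟪x - P x, z - P x⟫ ≤ 0 := by
  have : Nonempty C := ⟨⟨z, hz⟩⟩
  refine (norm_eq_iInf_iff_real_inner_le_zero hC (hP x).1).1 ?_ z hz
  have hbdd : BddBelow (Set.range fun w : C => ‖x - w‖) :=
    ⟨0, Set.forall_mem_range.2 fun _ => norm_nonneg _⟩
  exact le_antisymm (le_ciInf fun w => (hP x).2 w w.2) (ciInf_le hbdd ⟨P x, (hP x).1⟩)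

theorem IsMetricProjection.norm_relaxedProj_sub_le (hP : IsMetricProjection C P)
    (hC : Convex ℝ C) {t : ℝ} (ht₀ : 0 ≤ t) (ht₂ : t ≤ 2) (x : E) {c : E} (hc : c ∈ C) :
    ‖relaxedProj P t x - c‖ ≤ ‖x - c‖ := by
  set d := P x - x
  have hvar : ⟪x - c, d⟫ ≤ -‖d‖ ^ 2 := by
    have h : ⟪x - c, d⟫ + ‖d‖ ^ 2 = ⟪x - P x, c - P x⟫ := calc
      _ = ⟪-d, -(x - c + d)⟫ := by
        rw [inner_neg_neg, inner_add_right, real_inner_self_eq_norm_sq, real_inner_comm (x - c) d]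
      _ = ⟪x - P x, c - P x⟫ := by congr 1 <;> simp only [d] <;> abel
    linarith [hP.inner_sub_apply_le_zero hC x hc]
  have hsq : ‖relaxedProj P t x - c‖ ^ 2 = ‖x - c‖ ^ 2 + 2 * t * ⟪x - c, d⟫ + t ^ 2 * ‖d‖ ^ 2 := by
    rw [relaxedProj, add_sub_right_comm, norm_add_sq_real, inner_smul_right, norm_smul,
      Real.norm_of_nonneg ht₀]
    ring
  refine sq_le_sq₀ (norm_nonneg _) (norm_nonneg _) |>.1 ?_
  rw [hsq]
  nlinarith [mul_nonneg (mul_nonneg ht₀ (sub_nonneg.2 ht₂)) (sq_nonneg ‖d‖)]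

theorem IsMetricProjection.relaxedProj_eq_self_iff (hP : IsMetricProjection C P) {t : ℝ}
    (ht : t ≠ 0) {x : E} : relaxedProj P t x = x ↔ x ∈ C := by
  refine ⟨fun h => ?_, fun hx => by simp [relaxedProj, hP.apply_eq_self hx]⟩
  rw [relaxedProj, add_eq_left, smul_eq_zero, sub_eq_zero] at h
  exact h.resolve_left ht ▸ (hP x).1

end MetricProjection

section Averaging

variable {E : Type*} [NormedAddCommGroup E] [InnerProductSpace ℝ E]
  {ι : Type*} [Fintype ι] [DecidableEq ι] {A : Matrix ι ι ℝ}

theorem strictConvexOn_norm_sq : StrictConvexOn ℝ Set.univ fun x : E => ‖x‖ ^ 2 := by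
  refine (strongConvexOn_iff_convex (m := 2).2 ?_).strictConvexOn two_pos
  simpa using convexOn_const (0 : ℝ) convex_univ

theorem eq_of_sum_norm_sq_le_sum_norm_sq_smul (hA : A ∈ doublyStochastic ℝ ι) {x : ι → E}
    (hle : ∑ j, ‖x j‖ ^ 2 ≤ ∑ i, ‖∑ j, A i j • x j‖ ^ 2) {i j k : ι}
    (hj : A i j ≠ 0) (hk : A i k ≠ 0) : x j = x k := by
  have hA₀ : ∀ i, ∀ j ∈ univ, 0 ≤ A i j := fun _ _ _ => nonneg_of_mem_doublyStochastic hA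
  have hrow := sum_row_of_mem_doublyStochastic hA
  have hjensen : ∀ i, ‖∑ j, A i j • x j‖ ^ 2 ≤ ∑ j, A i j * ‖x j‖ ^ 2 := fun i =>
    strictConvexOn_norm_sq.convexOn.map_sum_le (hA₀ i) (hrow i) fun _ _ => Set.mem_univ _
  have htotal : ∑ i, ∑ j, A i j * ‖x j‖ ^ 2 = ∑ j, ‖x j‖ ^ 2 := by
    rw [sum_comm]
    simp_rw [← sum_mul, sum_col_of_mem_doublyStochastic hA, one_mul]
  have hgap : ∑ i, (∑ j, A i j * ‖x j‖ ^ 2 - ‖∑ j, A i j • x j‖ ^ 2) = 0 := by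
    rw [sum_sub_distrib, htotal]
    exact sub_eq_zero.2 (le_antisymm hle (htotal ▸ sum_le_sum fun i _ => hjensen i))
  have hrow_eq : ‖∑ j, A i j • x j‖ ^ 2 = ∑ j, A i j * ‖x j‖ ^ 2 :=
    (sub_eq_zero.1 ((sum_eq_zero_iff_of_nonneg fun i _ => sub_nonneg.2 (hjensen i)).1 hgap i
      (mem_univ i))).symm
  exact (strictConvexOn_norm_sq.map_sum_eq_iff_of_nonneg (hA₀ i) (hrow i)
    fun _ _ => Set.mem_univ _).1 hrow_eq (mem_univ j) hj (mem_univ k) hk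

theorem forall_eq_sum_smul_iff_of_quasi_nonexpansive (hA : A ∈ doublyStochastic ℝ ι)
    (hdiag : ∀ i, 0 < A i i)
    (hconn : ∀ j i : ι, Relation.ReflTransGen (fun a b => 0 < A b a) j i)
    {U : E → E} {c : E} (hU : ∀ x, ‖U x - c‖ ≤ ‖x - c‖) (w : ι → E) :
    (∀ i, w i = ∑ j, A i j • U (w j)) ↔ (∀ i j, w i = w j) ∧ ∀ i, U (w i) = w i := by
  have hconst : ∀ (y : E) i, ∑ j, A i j • y = y := fun y i => by
    rw [← sum_smul, sum_row_of_mem_doublyStochastic hA, one_smul]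
  refine ⟨fun hw => ?_, fun ⟨hcons, hfix⟩ i => by simp_rw [hfix, hcons _ i, hconst]⟩
  set x := fun j => U (w j) - c
  have hwx : ∀ i, w i - c = ∑ j, A i j • x j := fun i => by
    simp_rw [x, smul_sub, sum_sub_distrib, hconst, ← hw]
  have hedge : ∀ a b, 0 < A b a → x a = x b := fun a b hab =>
    eq_of_sum_norm_sq_le_sum_norm_sq_smul hA
      (by simp_rw [← hwx]; exact sum_le_sum fun i _ => pow_le_pow_left₀ (norm_nonneg _) (hU _) 2)
      hab.ne' (hdiag b).ne'
  have hx : ∀ j i, x j = x i := fun j i => by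
    induction hconn j i with
    | refl => rfl
    | tail _ hbc ih => exact ih.trans (hedge _ _ hbc)
  have hwx' : ∀ i, w i - c = U (w i) - c := fun i => by
    rw [hwx, sum_congr rfl fun j _ => by rw [hx j i], hconst]
  exact ⟨fun i j => sub_left_injective ((hwx' i).trans ((hx i j).trans (hwx' j).symm)),
    fun i => (sub_left_injective (hwx' i)).symm⟩

end Averaging

theorem fixed_points_of_distributed_allocation_operator_general {N n : ℕ}
    (A : Matrix (Fin N) (Fin N) ℝ)
    (hnonneg : ∀ i j, 0 ≤ A i j)
    (hrow : ∀ i, ∑ j, A i j = 1)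
    (hcol : ∀ j, ∑ i, A i j = 1)
    (hdiag : ∀ i, 0 < A i i)
    (hconn : ∀ j i : Fin N, Relation.ReflTransGen (fun a b => 0 < A b a) j i)
    (C : Set (EuclideanSpace ℝ (Fin n)))
    (hCo : Convex ℝ C)
    (P : EuclideanSpace ℝ (Fin n) → EuclideanSpace ℝ (Fin n))
    (hP : ∀ x, P x ∈ C ∧ ∀ z ∈ C, ‖x - P x‖ ≤ ‖x - z‖)
    (α β : ℝ) (hα : α ∈ Set.Ioc (0:ℝ) 1) (hβ : β ∈ Set.Ico (0:ℝ) 1)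
    (L : PiLp 2 (fun _ : Fin N => EuclideanSpace ℝ (Fin n)) →
         PiLp 2 (fun _ : Fin N => EuclideanSpace ℝ (Fin n)))
    (hL : ∀ x i, L x i = ∑ j, A i j • x j)
    (T : PiLp 2 (fun _ : Fin N => EuclideanSpace ℝ (Fin n)) →
         PiLp 2 (fun _ : Fin N => EuclideanSpace ℝ (Fin n)))
    (hT : ∀ w i, T w i = (1 - β) • P (w i) + β • ((2:ℝ) • P (w i) - w i))
    (S : PiLp 2 (fun _ : Fin N => EuclideanSpace ℝ (Fin n)) →
         PiLp 2 (fun _ : Fin N => EuclideanSpace ℝ (Fin n)))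
    (hS : ∀ w, S w = (1 - α) • L w + α • L (T w)) :
    ({w | S w = w} = {w | ∀ i j : Fin N, w i = w j} ∩ {w | ∀ i, w i ∈ C}) ∧
    ∀ c ∈ C, S (WithLp.toLp 2 (fun _ => c)) = WithLp.toLp 2 (fun _ => c) := by
  have hP' : IsMetricProjection C P := hP
  have hA : A ∈ doublyStochastic ℝ (Fin N) := mem_doublyStochastic_iff_sum.2 ⟨hnonneg, hrow, hcol⟩
  set t := α * (1 + β)
  have ht : 0 < t ∧ t ≤ 2 := ⟨by nlinarith [hα.1, hβ.1], by nlinarith [hα.1, hα.2, hβ.1, hβ.2]⟩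
  have hSw : ∀ w i, S w i = ∑ j, A i j • relaxedProj P t (w j) := fun w i => by
    simp only [hS, PiLp.add_apply, PiLp.smul_apply, hL, hT, smul_sum, ← sum_add_distrib]
    refine sum_congr rfl fun j _ => ?_
    simp only [relaxedProj, t]
    module
  have hfix : ∀ w, S w = w ↔ (∀ i j, w i = w j) ∧ ∀ i, w i ∈ C := fun w => by
    simp_rw [← hP'.relaxedProj_eq_self_iff ht.1.ne', ← forall_eq_sum_smul_iff_of_quasi_nonexpansive
      hA hdiag hconn (fun x => hP'.norm_relaxedProj_sub_le hCo ht.1.le ht.2 x (hP 0).1),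
      ← hSw, eq_comm (a := w _), PiLp.ext_iff]
  exact ⟨Set.ext hfix, fun c hc => (hfix _).2 ⟨fun _ _ => rfl, fun _ => hc⟩⟩

/-- for the operator S(w) = (1−α)(A⊗I_n)w + α(A⊗I_n)T(w), where A
is doubly stochastic with positive diagonal and strongly connected graph, and T
acts blockwise as (1−β)proj_C + βQ_C, we have fix(S) = 𝒜 ∩ C^N; in particular
every consensus vector col(c,…,c) with c ∈ C is a fixed point of S. -/
theorem fixed_points_of_distributed_allocation_operator {N n : ℕ}
    (A : Matrix (Fin N) (Fin N) ℝ)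
    (hnonneg : ∀ i j, 0 ≤ A i j)
    (hrow : ∀ i, ∑ j, A i j = 1)
    (hcol : ∀ j, ∑ i, A i j = 1)
    (hdiag : ∀ i, 0 < A i i)
    (hconn : ∀ j i : Fin N, Relation.ReflTransGen (fun a b => 0 < A b a) j i)
    (C : Set (EuclideanSpace ℝ (Fin n)))
    (hC : C.Nonempty) (hCl : IsClosed C) (hCo : Convex ℝ C)
    (P : EuclideanSpace ℝ (Fin n) → EuclideanSpace ℝ (Fin n))
    (hP : ∀ x, P x ∈ C ∧ ∀ z ∈ C, ‖x - P x‖ ≤ ‖x - z‖)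
    (α β : ℝ) (hα : α ∈ Set.Ioc (0:ℝ) 1) (hβ : β ∈ Set.Ico (0:ℝ) 1)
    (L : PiLp 2 (fun _ : Fin N => EuclideanSpace ℝ (Fin n)) →
         PiLp 2 (fun _ : Fin N => EuclideanSpace ℝ (Fin n)))
    (hL : ∀ x i, L x i = ∑ j, A i j • x j)
    (T : PiLp 2 (fun _ : Fin N => EuclideanSpace ℝ (Fin n)) →
         PiLp 2 (fun _ : Fin N => EuclideanSpace ℝ (Fin n)))
    (hT : ∀ w i, T w i = (1 - β) • P (w i) + β • ((2:ℝ) • P (w i) - w i))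
    (S : PiLp 2 (fun _ : Fin N => EuclideanSpace ℝ (Fin n)) →
         PiLp 2 (fun _ : Fin N => EuclideanSpace ℝ (Fin n)))
    (hS : ∀ w, S w = (1 - α) • L w + α • L (T w)) :
    ({w | S w = w} = {w | ∀ i j : Fin N, w i = w j} ∩ {w | ∀ i, w i ∈ C}) ∧
    ∀ c ∈ C, S (WithLp.toLp 2 (fun _ => c)) = WithLp.toLp 2 (fun _ => c) :=
  fixed_points_of_distributed_allocation_operator_general A hnonneg hrow hcol hdiag hconn C hCo P hP
    α β hα hβ L hL T hT S hS
end

section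
/- Let ℳ be a finite family of paracontractions ℝⁿ → ℝⁿ (with respect to a fixed norm) with ⋂_{M∈ℳ} fix(M) ≠ ∅. Consider the iteration x(k+1) = M_k(x(k)) with each M_k ∈ ℳ. Then x(k) converges to a point that is a common fixed point of all operators occurring infinitely often in the sequence (M_k). -/
/-!
Fix a common fixed point `z`. Every map of the family moves points no farther from `z`, so
`dist (x k) z` decreases to some `d` and the orbit stays in a compact ball; let `y` be a cluster
point. If `x` clusters at `w` along times where `M i` is applied, continuity makes both `w` and
`M i w` lie at distance `d` from `z`, so the strict paracontraction inequality forces `M i w = w`.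
Consequently, for each `i` with `M i y ≠ y`, the times where `M i` is applied eventually keep away
from `y`; with finitely many maps, some ball around `y` is eventually entered only at times where
the applied map fixes `y`. Once the orbit is in that ball, its distance to `y` never increases
again, and since the orbit comes arbitrarily close to `y`, it converges to `y`.
-/

open Filter Function Topology

variable {X ι : Type*} [PseudoMetricSpace X]

def IsParacontraction (f : X → X) : Prop :=
  ∀ x y, IsFixedPt f y → ¬IsFixedPt f x → dist (f x) y < dist x y

theorem IsParacontraction.dist_le {f : X → X} (hf : IsParacontraction f) {y : X}
    (hy : IsFixedPt f y) (x : X) : dist (f x) y ≤ dist x y := by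
  by_cases hx : IsFixedPt f x
  · rw [hx]
  · exact (hf x y hy hx).le

theorem exists_strictMono_tendsto_of_frequently_dist_lt {p : ℕ → Prop} {u : ℕ → X} {w : X}
    (h : ∀ ε > 0, ∃ᶠ k in atTop, p k ∧ dist (u k) w < ε) :
    ∃ ψ : ℕ → ℕ, StrictMono ψ ∧ (∀ j, p (ψ j)) ∧ Tendsto (u ∘ ψ) atTop (𝓝 w) := by
  obtain ⟨ψ, hψ, hp⟩ := extraction_forall_of_frequently fun j : ℕ =>
    h (1 / ((j : ℝ) + 1)) Nat.one_div_pos_of_nat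
  refine ⟨ψ, hψ, fun j => (hp j).1, tendsto_iff_dist_tendsto_zero.2 ?_⟩
  exact squeeze_zero (fun _ => dist_nonneg) (fun j => (hp j).2.le)
    tendsto_one_div_add_atTop_nhds_zero_nat

section Iteration

variable {M : ι → X → X} {σ : ℕ → ι} {x : ℕ → X}

theorem dist_iterate_succ_le (hM : ∀ i, IsParacontraction (M i))
    (hx : ∀ k, x (k + 1) = M (σ k) (x k)) {y : X} {k : ℕ} (hy : IsFixedPt (M (σ k)) y) :
    dist (x (k + 1)) y ≤ dist (x k) y :=
  hx k ▸ (hM (σ k)).dist_le hy (x k)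

theorem antitone_dist_iterate (hM : ∀ i, IsParacontraction (M i))
    (hx : ∀ k, x (k + 1) = M (σ k) (x k)) {z : X} (hz : ∀ i, IsFixedPt (M i) z) :
    Antitone fun k => dist (x k) z :=
  antitone_nat_of_succ_le fun k => dist_iterate_succ_le hM hx (hz (σ k))

theorem exists_tendsto_dist_iterate (hM : ∀ i, IsParacontraction (M i))
    (hx : ∀ k, x (k + 1) = M (σ k) (x k)) {z : X} (hz : ∀ i, IsFixedPt (M i) z) :
    ∃ d, Tendsto (fun k => dist (x k) z) atTop (𝓝 d) :=
  ⟨_, tendsto_atTop_ciInf (antitone_dist_iterate hM hx hz)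
    ⟨0, by rintro _ ⟨k, rfl⟩; exact dist_nonneg⟩⟩

theorem isFixedPt_of_frequently_dist_lt {i : ι} (hMc : Continuous (M i))
    (hM : ∀ i, IsParacontraction (M i)) (hx : ∀ k, x (k + 1) = M (σ k) (x k)) {z : X}
    (hz : ∀ i, IsFixedPt (M i) z) {w : X}
    (hw : ∀ ε > 0, ∃ᶠ k in atTop, σ k = i ∧ dist (x k) w < ε) :
    IsFixedPt (M i) w := by
  obtain ⟨ψ, hψ, hσψ, hxψ⟩ := exists_strictMono_tendsto_of_frequently_dist_lt hw
  obtain ⟨d, hd⟩ := exists_tendsto_dist_iterate hM hx hz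
  have hw_dist : dist w z = d :=
    tendsto_nhds_unique (hxψ.dist tendsto_const_nhds) (hd.comp hψ.tendsto_atTop)
  have hxψ_succ : Tendsto (fun j => x (ψ j + 1)) atTop (𝓝 (M i w)) :=
    ((hMc.tendsto w).comp hxψ).congr fun j => by simp [hx, hσψ]
  have hMw_dist : dist (M i w) z = d :=
    tendsto_nhds_unique (hxψ_succ.dist tendsto_const_nhds)
      (hd.comp ((tendsto_add_atTop_nat 1).comp hψ.tendsto_atTop))
  by_contra hne
  exact (hM i w z (hz i) hne).ne (hMw_dist.trans hw_dist.symm)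

theorem exists_pos_eventually_isFixedPt_of_dist_lt [Finite ι] (hMc : ∀ i, Continuous (M i))
    (hM : ∀ i, IsParacontraction (M i)) (hx : ∀ k, x (k + 1) = M (σ k) (x k)) {z : X}
    (hz : ∀ i, IsFixedPt (M i) z) (y : X) :
    ∃ δ > 0, ∀ᶠ k in atTop, dist (x k) y < δ → IsFixedPt (M (σ k)) y := by
  -- Quantifying over all small `δ` lets `eventually_all` take the minimum over the finite family.
  have small : ∀ i, ∀ᶠ δ in 𝓝[>] (0 : ℝ),
      ∀ᶠ k in atTop, σ k = i → dist (x k) y < δ → IsFixedPt (M i) y := by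
    intro i
    by_cases hy : IsFixedPt (M i) y
    · exact .of_forall fun _ => .of_forall fun _ _ _ => hy
    obtain ⟨ε, hε, hfar⟩ : ∃ ε > 0, ∀ᶠ k in atTop, σ k = i → ε ≤ dist (x k) y := by
      by_contra! h
      exact hy (isFixedPt_of_frequently_dist_lt (hMc i) hM hx hz h)
    filter_upwards [Ioc_mem_nhdsGT hε] with δ hδ
    filter_upwards [hfar] with k hk hσ hlt
    exact absurd (hlt.trans_le hδ.2) (hk hσ).not_gt
  obtain ⟨δ, hsmall, hδ⟩ := ((eventually_all.2 small).and self_mem_nhdsWithin).exists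
  exact ⟨δ, hδ, (eventually_all.2 hsmall).mono fun k hk => hk (σ k) rfl⟩

theorem tendsto_iterate_of_mapClusterPt (hM : ∀ i, IsParacontraction (M i))
    (hx : ∀ k, x (k + 1) = M (σ k) (x k)) {y : X} (hy : MapClusterPt y atTop x) {δ : ℝ}
    (hδ : 0 < δ) (hfixed : ∀ᶠ k in atTop, dist (x k) y < δ → IsFixedPt (M (σ k)) y) :
    Tendsto x atTop (𝓝 y) := by
  obtain ⟨K, hK⟩ := eventually_atTop.1 hfixed
  refine Metric.tendsto_atTop.2 fun ε hε => ?_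
  obtain ⟨N, hN, hKN⟩ := ((hy.frequently (Metric.ball_mem_nhds y (lt_min hε hδ))).and_eventually
    (eventually_ge_atTop K)).exists
  have trapped : ∀ n ≥ N, dist (x n) y ≤ dist (x N) y := by
    intro n hn
    induction n, hn using Nat.le_induction with
    | base => rfl
    | succ n hn ih =>
      have hnear : dist (x n) y < δ := ih.trans_lt (hN.trans_le (min_le_right _ _))
      exact (dist_iterate_succ_le hM hx (hK n (hKN.trans hn) hnear)).trans ih
  exact ⟨N, fun n hn => (trapped n hn).trans_lt (hN.trans_le (min_le_left _ _))⟩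

theorem exists_mapClusterPt_iterate [ProperSpace X] (hM : ∀ i, IsParacontraction (M i))
    (hx : ∀ k, x (k + 1) = M (σ k) (x k)) {z : X} (hz : ∀ i, IsFixedPt (M i) z) :
    ∃ y, MapClusterPt y atTop x := by
  obtain ⟨y, -, hy⟩ := (isCompact_closedBall z (dist (x 0) z)).exists_mapClusterPt_of_frequently
    (l := atTop) (.of_forall fun k => Metric.mem_closedBall.2 (antitone_dist_iterate hM hx hz (Nat.zero_le k)))
  exact ⟨y, hy⟩

end Iteration

/-- Elsner–Koltracht–Neumann: for a finite family of
paracontractions with a common fixed point, any iteration x(k+1) = M_{σ(k)}(x(k))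
converges to a common fixed point of all operators occurring infinitely often. -/
theorem elsner_koltracht_neumann {n m : ℕ}
    (M : Fin m → (EuclideanSpace ℝ (Fin n) → EuclideanSpace ℝ (Fin n)))
    (hMc : ∀ i, Continuous (M i))
    (hM : ∀ i, ∀ x y, M i y = y → M i x ≠ x → ‖M i x - y‖ < ‖x - y‖)
    (hfix : ∃ z, ∀ i, M i z = z)
    (σ : ℕ → Fin m) (x : ℕ → EuclideanSpace ℝ (Fin n))
    (hiter : ∀ k, x (k + 1) = M (σ k) (x k)) :
    ∃ xstar, Tendsto x atTop (nhds xstar) ∧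
      ∀ i : Fin m, (∃ᶠ k in atTop, σ k = i) → M i xstar = xstar := by
  obtain ⟨z, hz⟩ := hfix
  have hpc : ∀ i, IsParacontraction (M i) := fun i x y hy hx => by
    simpa only [dist_eq_norm] using hM i x y hy hx
  obtain ⟨y, hy⟩ := exists_mapClusterPt_iterate hpc hiter hz
  obtain ⟨δ, hδ, hfixed⟩ := exists_pos_eventually_isFixedPt_of_dist_lt hMc hpc hiter hz y
  have hxy : Tendsto x atTop (𝓝 y) := tendsto_iterate_of_mapClusterPt hpc hiter hy hδ hfixed
  exact ⟨y, hxy, fun i hi => isFixedPt_of_frequently_dist_lt (hMc i) hpc hiter hz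
    fun ε hε => hi.and_eventually (Metric.tendsto_nhds.1 hxy ε hε)⟩
end

section
/- Let C ⊆ ℝⁿ be nonempty closed convex and let (y_k)_{k≥1} be a uniformly bounded sequence in ℝⁿ with running averages ȳ_k := (1/k) Σ_{j=1}^k y_j. If ⟨ȳ_k − proj_C(ȳ_k), y_{k+1} − proj_C(ȳ_k)⟩ ≤ 0 for all k, then dist(ȳ_k, C) → 0 as k → ∞. -/
open Filter

/-! Let `d_k = ‖ȳ_k − proj_C(ȳ_k)‖`. Since `proj_C(ȳ_k) ∈ C` competes with `proj_C(ȳ_{k+1})`,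
`(k+1) d_{k+1} ≤ ‖(k+1)(ȳ_{k+1} − proj_C(ȳ_k))‖ = ‖k(ȳ_k − proj_C(ȳ_k)) + (y_{k+1} − proj_C(ȳ_k))‖`,
and expanding the square, the cross term is nonpositive by hypothesis while the last term is bounded
by a constant `M`, as everything in sight is bounded. So `(k+1)² d_{k+1}² ≤ k² d_k² + M`, whence
`d_k² ≤ M / k`. -/

section RunningAverage

variable {E : Type*}

noncomputable def runningAvg [AddCommGroup E] [Module ℝ E] (y : ℕ → E) (k : ℕ) : E :=
  (k : ℝ)⁻¹ • ∑ j ∈ Finset.Icc 1 k, y j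

theorem succ_smul_runningAvg_succ [AddCommGroup E] [Module ℝ E] (y : ℕ → E) (k : ℕ) :
    ((k : ℝ) + 1) • runningAvg y (k + 1) = (k : ℝ) • runningAvg y k + y (k + 1) := by
  rcases Nat.eq_zero_or_pos k with rfl | hk
  · simp [runningAvg]
  · simp only [runningAvg, Finset.sum_Icc_succ_top (Nat.le_add_left 1 k), smul_smul]
    push_cast
    rw [mul_inv_cancel₀ (by positivity), mul_inv_cancel₀ (by positivity), one_smul, one_smul]

theorem norm_runningAvg_le [SeminormedAddCommGroup E] [NormedSpace ℝ E] {y : ℕ → E} {L : ℝ}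
    (hy : ∀ k, ‖y k‖ ≤ L) (k : ℕ) : ‖runningAvg y k‖ ≤ L := by
  rcases Nat.eq_zero_or_pos k with rfl | hk
  · simpa [runningAvg] using (norm_nonneg _).trans (hy 0)
  · have hsum : ‖∑ j ∈ Finset.Icc 1 k, y j‖ ≤ k * L := by
      simpa using norm_sum_le_of_le (Finset.Icc 1 k) fun j _ => hy j
    rw [runningAvg, norm_smul, norm_inv, Real.norm_natCast, inv_mul_le_iff₀ (by positivity)]
    exact hsum

end RunningAverage

theorem norm_sub_proj_le {E : Type*} [SeminormedAddCommGroup E] {C : Set E} {P : E → E}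
    (hP : ∀ x, P x ∈ C ∧ ∀ z ∈ C, ‖x - P x‖ ≤ ‖x - z‖) (z x : E) :
    ‖z - P x‖ ≤ ‖z‖ + 2 * ‖x‖ + ‖P 0‖ :=
  calc ‖z - P x‖ ≤ ‖z‖ + ‖x‖ + ‖x - P x‖ := by
        linarith [norm_sub_le_norm_sub_add_norm_sub z x (P x), norm_sub_le z x]
    _ ≤ ‖z‖ + ‖x‖ + (‖x‖ + ‖P 0‖) := by
        gcongr
        exact ((hP x).2 _ (hP 0).1).trans (norm_sub_le _ _)
    _ = _ := by ring

section InnerProductSpace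

variable {E : Type*} [NormedAddCommGroup E] [InnerProductSpace ℝ E]

theorem norm_smul_add_sq_le_of_inner_nonpos {t : ℝ} {u v : E} (h : t * inner ℝ u v ≤ 0) :
    ‖t • u + v‖ ^ 2 ≤ t ^ 2 * ‖u‖ ^ 2 + ‖v‖ ^ 2 := by
  rw [norm_add_sq_real, norm_smul, real_inner_smul_left, mul_pow, Real.norm_eq_abs, sq_abs]
  linarith

theorem sq_succ_mul_norm_sub_proj_runningAvg_le {C : Set E} {P : E → E}
    (hP : ∀ x, P x ∈ C ∧ ∀ z ∈ C, ‖x - P x‖ ≤ ‖x - z‖) {y : ℕ → E} {k : ℕ}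
    (happr : (k : ℝ) * inner ℝ (runningAvg y k - P (runningAvg y k))
      (y (k + 1) - P (runningAvg y k)) ≤ 0) :
    (((k : ℝ) + 1) * ‖runningAvg y (k + 1) - P (runningAvg y (k + 1))‖) ^ 2 ≤
      ((k : ℝ) * ‖runningAvg y k - P (runningAvg y k)‖) ^ 2
        + ‖y (k + 1) - P (runningAvg y k)‖ ^ 2 := by
  set a := runningAvg y k
  set p := P a
  have hdecomp :
      ((k : ℝ) + 1) • (runningAvg y (k + 1) - p) = (k : ℝ) • (a - p) + (y (k + 1) - p) := by
    rw [smul_sub, succ_smul_runningAvg_succ]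
    module
  calc (((k : ℝ) + 1) * ‖runningAvg y (k + 1) - P (runningAvg y (k + 1))‖) ^ 2
      ≤ (((k : ℝ) + 1) * ‖runningAvg y (k + 1) - p‖) ^ 2 := by
        gcongr
        exact (hP _).2 p (hP a).1
    _ = ‖(k : ℝ) • (a - p) + (y (k + 1) - p)‖ ^ 2 := by
        rw [← hdecomp, norm_smul, Real.norm_of_nonneg (by positivity)]
    _ ≤ _ := by
        rw [mul_pow]
        exact norm_smul_add_sq_le_of_inner_nonpos happr

theorem sq_mul_norm_sub_proj_runningAvg_le {C : Set E} {P : E → E}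
    (hP : ∀ x, P x ∈ C ∧ ∀ z ∈ C, ‖x - P x‖ ≤ ‖x - z‖) {y : ℕ → E} {L : ℝ}
    (hy : ∀ k, ‖y k‖ ≤ L)
    (happr : ∀ k ≥ 1, inner ℝ (runningAvg y k - P (runningAvg y k))
      (y (k + 1) - P (runningAvg y k)) ≤ 0) (k : ℕ) :
    ((k : ℝ) * ‖runningAvg y k - P (runningAvg y k)‖) ^ 2 ≤ k * (3 * L + ‖P 0‖) ^ 2 := by
  induction k with
  | zero => simp
  | succ k ih =>
    have hcross : (k : ℝ) * inner ℝ (runningAvg y k - P (runningAvg y k))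
        (y (k + 1) - P (runningAvg y k)) ≤ 0 := by
      rcases Nat.eq_zero_or_pos k with rfl | hk
      · simp
      · exact mul_nonpos_of_nonneg_of_nonpos k.cast_nonneg (happr k hk)
    have hjump : ‖y (k + 1) - P (runningAvg y k)‖ ^ 2 ≤ (3 * L + ‖P 0‖) ^ 2 := by
      refine pow_le_pow_left₀ (norm_nonneg _) ?_ 2
      linarith [norm_sub_proj_le hP (y (k + 1)) (runningAvg y k), hy (k + 1),
        norm_runningAvg_le hy k]
    push_cast
    linarith [sq_succ_mul_norm_sub_proj_runningAvg_le hP hcross]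

end InnerProductSpace

theorem blackwell_approachability_general {n : ℕ} (C : Set (EuclideanSpace ℝ (Fin n)))
    (P : EuclideanSpace ℝ (Fin n) → EuclideanSpace ℝ (Fin n))
    (hP : ∀ x, P x ∈ C ∧ ∀ z ∈ C, ‖x - P x‖ ≤ ‖x - z‖)
    (y : ℕ → EuclideanSpace ℝ (Fin n)) (L : ℝ)
    (hbound : ∀ k, ‖y k‖ ≤ L)
    (avg : ℕ → EuclideanSpace ℝ (Fin n))
    (havg : ∀ k, avg k = (k : ℝ)⁻¹ • ∑ j ∈ Finset.Icc 1 k, y j)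
    (happr : ∀ k ≥ 1,
      (inner ℝ (avg k - P (avg k)) (y (k + 1) - P (avg k)) : ℝ) ≤ 0) :
    Tendsto (fun k => Metric.infDist (avg k) C) atTop (nhds 0) := by
  obtain rfl : avg = runningAvg y := funext havg
  set M := (3 * L + ‖P 0‖) ^ 2
  refine squeeze_zero' (g := fun k : ℕ => Real.sqrt (M / k))
    (Eventually.of_forall fun k => Metric.infDist_nonneg) ?_
    (by simpa only [Real.sqrt_zero] using (tendsto_const_div_atTop_nhds_zero_nat M).sqrt)
  filter_upwards [eventually_gt_atTop 0] with k hk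
  have hk : (0 : ℝ) < k := Nat.cast_pos.mpr hk
  have hsq := sq_mul_norm_sub_proj_runningAvg_le hP hbound happr k
  calc Metric.infDist (runningAvg y k) C ≤ ‖runningAvg y k - P (runningAvg y k)‖ :=
        (Metric.infDist_le_dist_of_mem (hP _).1).trans_eq (dist_eq_norm _ _)
    _ ≤ Real.sqrt (M / k) := by
        refine Real.le_sqrt_of_sq_le ((le_div_iff₀ hk).2 (le_of_mul_le_mul_left ?_ hk))
        exact le_of_eq_of_le (by ring) hsq

/-- Blackwell's approachability principle: if a uniformly bounded
sequence (y_k)_{k≥1} satisfies ⟨ȳ_k − proj_C(ȳ_k), y_{k+1} − proj_C(ȳ_k)⟩ ≤ 0 for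
all k ≥ 1, where ȳ_k = (1/k)Σ_{j=1}^k y_j, then dist(ȳ_k, C) → 0. -/
theorem blackwell_approachability {n : ℕ} (C : Set (EuclideanSpace ℝ (Fin n)))
    (hC : C.Nonempty) (hCl : IsClosed C) (hCo : Convex ℝ C)
    (P : EuclideanSpace ℝ (Fin n) → EuclideanSpace ℝ (Fin n))
    (hP : ∀ x, P x ∈ C ∧ ∀ z ∈ C, ‖x - P x‖ ≤ ‖x - z‖)
    (y : ℕ → EuclideanSpace ℝ (Fin n)) (L : ℝ)
    (hbound : ∀ k, ‖y k‖ ≤ L)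
    (avg : ℕ → EuclideanSpace ℝ (Fin n))
    (havg : ∀ k, avg k = (k : ℝ)⁻¹ • ∑ j ∈ Finset.Icc 1 k, y j)
    (happr : ∀ k ≥ 1,
      (inner ℝ (avg k - P (avg k)) (y (k + 1) - P (avg k)) : ℝ) ≤ 0) :
    Tendsto (fun k => Metric.infDist (avg k) C) atTop (nhds 0) :=
  blackwell_approachability_general C P hP y L hbound avg havg happr
end
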